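/- Let L be an admissible labeling of the JSBAF of a Deductive ASPIC⊖ argumentation system, and let a, a′ be arguments with DR(a′) ⊆ DR(a) and ADSub(a′)^C ⊆ ADSub(a)^C. If L(a′) = OUT then L(a) = OUT. -/

import Mathlib

namespace JS

inductive Lab : Type
  | IN | OUT | UNDEC
deriving DecidableEq

structure JSBAF (A : Type) where
  att : A → A → Prop
  supp : Set A → A → Prop
  pref : A → A → Prop

variable {A : Type}

/-- Strict arguments: supported by the empty set or only by strict arguments. -/
inductive Strict (J : JSBAF A) : A → Prop
  | mk (S : Set A) (a : A) (h : J.supp S a) (hS : ∀ b ∈ S, Strict J b) : Strict J a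

/-- Structural restrictions on JSBAFs. -/
structure Restr (J : JSBAF A) : Prop where
  finSupp : ∀ S b, J.supp S b → S.Finite
  uniqSupp : ∀ S S' b, J.supp S b → J.supp S' b → S = S'
  acyc : ∀ a, ¬ Relation.TransGen (fun x y => ∃ S, J.supp S y ∧ x ∈ S) a a
  strictUnatt : ∀ a b, Strict J b → ¬ J.att a b
  prefRefl : ∀ a, J.pref a a
  prefTrans : ∀ a b c, J.pref a b → J.pref b c → J.pref a c
  prefTotal : ∀ a b, J.pref a b ∨ J.pref b a
  strictEq : ∀ a b, Strict J a → Strict J b → J.pref a b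
  strictTop : ∀ a b, ¬ Strict J a → Strict J b → J.pref a b ∧ ¬ J.pref b a

def inL (L : A → Lab) : Set A := {a | L a = Lab.IN}
def outL (L : A → Lab) : Set A := {a | L a = Lab.OUT}
def undecL (L : A → Lab) : Set A := {a | L a = Lab.UNDEC}

/-- Definition 2, item 1: legally IN. -/
def legallyIn (J : JSBAF A) (L : A → Lab) (a : A) : Prop :=
  (∀ b, J.att b a → L b = Lab.OUT) ∧
  ∀ S c, J.supp S c → a ∈ S → (∀ b ∈ S, b ≠ a → J.pref a b) →
    (L c = Lab.IN ∨
     (L c = Lab.UNDEC ∧ ∃ b ∈ S, b ≠ a ∧ (L b = Lab.OUT ∨ L b = Lab.UNDEC)) ∨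
     (L c = Lab.OUT ∧
       ((∃ b ∈ S, b ≠ a ∧ L b = Lab.OUT) ∨
        (∃ b₁ ∈ S, ∃ b₂ ∈ S, b₁ ≠ a ∧ b₂ ≠ a ∧ b₁ ≠ b₂ ∧
          L b₁ = Lab.UNDEC ∧ L b₂ = Lab.UNDEC))))

/-- Definition 2, item 2: legally OUT. -/
def legallyOut (J : JSBAF A) (L : A → Lab) (a : A) : Prop :=
  (∃ b, J.att b a ∧ L b = Lab.IN) ∨
  (∃ (n : ℕ) (S : ℕ → Set A) (b : ℕ → A),
    (∀ i ≤ n, J.supp (S i) (b i)) ∧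
    (∀ i < n, b i ∈ S (i + 1)) ∧
    a ∈ S 0 ∧
    (∀ d ∈ S 0, d ≠ a → L d = Lab.IN) ∧
    (∃ c, J.att c (b n) ∧ L c = Lab.IN) ∧
    (∀ i ≤ n, L (b i) = Lab.OUT) ∧
    (∀ i, 1 ≤ i → i ≤ n → ∀ d ∈ S i, d ≠ b (i - 1) → L d = Lab.IN) ∧
    (∀ d ∈ S 0, d ≠ a → J.pref a d))

/-- Admissible labelings. -/
def Admissible (J : JSBAF A) (L : A → Lab) : Prop :=
  (∀ a, L a = Lab.IN → legallyIn J L a) ∧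
  (∀ a, L a = Lab.OUT ↔ legallyOut J L a) ∧
  (∀ a, Strict J a → L a = Lab.IN)

/-- Preferred labelings: maximal admissible w.r.t. inclusion of IN-sets. -/
def Preferred (J : JSBAF A) (L : A → Lab) : Prop :=
  Admissible J L ∧ ∀ L', Admissible J L' → ¬ (inL L ⊂ inL L')

/-- The iterated OUT-sets of the SIM labeling. -/
def simO (J : JSBAF A) : ℕ → Set A
  | 0 => {a | ∃ b, Strict J b ∧ J.att b a}
  | n + 1 => simO J n ∪
      {a | ∃ S c, J.supp S c ∧ a ∈ S ∧ c ∈ simO J n ∧ ∀ d ∈ S, d ≠ a → Strict J d}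

def simIn (J : JSBAF A) : Set A := {a | Strict J a}
def simOut (J : JSBAF A) : Set A := ⋃ n, simO J n

open Classical in
/-- The strict-including-minimal labeling. -/
noncomputable def SIM (J : JSBAF A) : A → Lab := fun a =>
  if Strict J a then Lab.IN else if a ∈ simOut J then Lab.OUT else Lab.UNDEC

/-- The order on labelings. -/
def leL (L₁ L₂ : A → Lab) : Prop := inL L₁ ⊆ inL L₂ ∧ outL L₁ ⊆ outL L₂

end JS
namespace ASPIC

/-- An underlying logical language: formulas, atoms, interpretations, a classical
negation and conjunction, and the interpolation-style assumption on syntactically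
disjoint sets of formulas. -/
structure Logic where
  F : Type
  Atom : Type
  atoms : F → Set Atom
  I : Type
  inhab : Nonempty I
  Models : I → F → Prop
  neg : F → F
  conj : F → F → F
  neg_spec : ∀ i φ, Models i (neg φ) ↔ ¬ Models i φ
  conj_spec : ∀ i φ ψ, Models i (conj φ ψ) ↔ (Models i φ ∧ Models i ψ)
  atoms_neg : ∀ φ, atoms (neg φ) = atoms φ
  atoms_conj : ∀ φ ψ, atoms (conj φ ψ) = atoms φ ∪ atoms ψ
  interp : ∀ Γ Δ : Set F, (∀ φ ∈ Γ, ∀ ψ ∈ Δ, atoms φ ∩ atoms ψ = ∅) →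
    (∃ i, ∀ φ ∈ Γ, Models i φ) → (∃ i, ∀ ψ ∈ Δ, Models i ψ) →
    (∃ i, (∀ φ ∈ Γ, Models i φ) ∧ (∀ ψ ∈ Δ, Models i ψ))

/-- The model-based consequence relation ⊨_C. -/
def Conseq (L : Logic) (Γ : Set L.F) (φ : L.F) : Prop :=
  ∀ i, (∀ ψ ∈ Γ, L.Models i ψ) → L.Models i φ

/-- φ = −ψ: one formula is the negation of the other. -/
def negOf (L : Logic) (φ ψ : L.F) : Prop := φ = L.neg ψ ∨ ψ = L.neg φ

/-- Conjunction of a nonempty list of formulas: conjL L φ [ψ₁,…] = φ ∧ ψ₁ ∧ … . -/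
def conjL (L : Logic) : L.F → List L.F → L.F
  | φ, [] => φ
  | φ, ψ :: l => L.conj φ (conjL L ψ l)

/-- A (defeasible) rule: antecedents and conclusion. -/
abbrev Rule (L : Logic) := List L.F × L.F

/-- An argumentation system of Deductive ASPIC⊖: satisfiable axioms, defeasible rules,
a (partial) naming function and a total preorder on defeasible rules.  The strict rules
are the axiomatic rules together with all consequence-based rules. -/
structure ASys (L : Logic) where
  AX : Set L.F
  AX_sat : ∃ i, ∀ φ ∈ AX, L.Models i φ
  Rd : Set (Rule L)
  name : Rule L → Option L.F
  rpref : Rule L → Rule L → Prop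
  rpref_refl : ∀ r, rpref r r
  rpref_trans : ∀ r s t, rpref r s → rpref s t → rpref r t
  rpref_total : ∀ r s, rpref r s ∨ rpref s r

/-- Top-rule kinds: axiomatic, consequence-based strict, defeasible. -/
inductive RK : Type
  | ax | cb | df
deriving DecidableEq

/-- Argument trees (with the kind of the top rule and the conclusion recorded). -/
inductive Arg (L : Logic) : Type
  | node (k : RK) (subs : List (Arg L)) (concl : L.F)

def Arg.concl {L : Logic} : Arg L → L.F
  | .node _ _ φ => φ

def Arg.subs {L : Logic} : Arg L → List (Arg L)
  | .node _ s _ => s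

def Arg.kind {L : Logic} : Arg L → RK
  | .node k _ _ => k

/-- Well-formed arguments of an argumentation system. -/
inductive Wf (L : Logic) (as : ASys L) : Arg L → Prop
  | ax (φ : L.F) (h : φ ∈ as.AX) : Wf L as (.node .ax [] φ)
  | cb (subs : List (Arg L)) (φ : L.F) (hs : ∀ a ∈ subs, Wf L as a)
      (h : Conseq L {ψ | ∃ a ∈ subs, Arg.concl a = ψ} φ) : Wf L as (.node .cb subs φ)
  | df (subs : List (Arg L)) (φ : L.F) (hs : ∀ a ∈ subs, Wf L as a)
      (h : (subs.map Arg.concl, φ) ∈ as.Rd) : Wf L as (.node .df subs φ)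

/-- Sub-argument relation: `Sub a b` means a is a sub-argument of b. -/
inductive Sub (L : Logic) : Arg L → Arg L → Prop
  | refl (a : Arg L) : Sub L a a
  | step (a b : Arg L) (k : RK) (subs : List (Arg L)) (φ : L.F)
      (hb : b ∈ subs) (h : Sub L a b) : Sub L a (.node k subs φ)

/-- Conclusions of the sub-arguments of a. -/
def SubC (L : Logic) (a : Arg L) : Set L.F := {φ | ∃ b, Sub L b a ∧ Arg.concl b = φ}

/-- Axiomatic and defeasible sub-arguments. -/
def ADSub (L : Logic) (a : Arg L) : Set (Arg L) := {b | Sub L b a ∧ Arg.kind b ≠ RK.cb}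

/-- Conclusions of the axiomatic and defeasible sub-arguments. -/
def ADSubC (L : Logic) (a : Arg L) : Set L.F :=
  {φ | ∃ b, Sub L b a ∧ Arg.kind b ≠ RK.cb ∧ Arg.concl b = φ}

/-- Defeasible rules used in an argument. -/
def DR (L : Logic) (a : Arg L) : Set (Rule L) :=
  {r | ∃ subs, Sub L (Arg.node RK.df subs r.2) a ∧ r.1 = subs.map Arg.concl}

/-- Strict arguments: no defeasible rules used. -/
def IsStrictArg (L : Logic) (a : Arg L) : Prop := DR L a = ∅

/-- Elitist weakest-link lifting of the rule preorder to arguments (a ⪯_ewl b). -/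
def ewl (L : Logic) (as : ASys L) (a b : Arg L) : Prop :=
  (DR L a = ∅ ∧ DR L b = ∅) ∨ ∃ ra ∈ DR L a, ∀ rb ∈ DR L b, as.rpref ra rb

/-- a undercuts b: the conclusion of a is the negation of the name of a defeasible rule
used in b. -/
def Undercuts (L : Logic) (as : ASys L) (a b : Arg L) : Prop :=
  ∃ subs φ, Sub L (Arg.node RK.df subs φ) b ∧
    ∃ nm, as.name (subs.map Arg.concl, φ) = some nm ∧ negOf L (Arg.concl a) nm

/-- a gen-rebuts b: b is defeasible and the conclusion of a is the negation of a conjunction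
of conclusions of sub-arguments of b. -/
def GenRebuts (L : Logic) (a b : Arg L) : Prop :=
  DR L b ≠ ∅ ∧ ∃ (φ : L.F) (l : List L.F),
    (∀ χ ∈ φ :: l, χ ∈ SubC L b) ∧ Arg.concl a = L.neg (conjL L φ l)

/-- a defeats b: a undercuts b, or a gen-rebuts b and a is not strictly weaker than b. -/
def Defeats (L : Logic) (as : ASys L) (a b : Arg L) : Prop :=
  Undercuts L as a b ∨
    (GenRebuts L a b ∧ ¬ (ewl L as a b ∧ ¬ ewl L as b a))

/-- The strict rules of an argumentation system: axiomatic or consequence-based. -/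
def StrictRule (L : Logic) (as : ASys L) (r : Rule L) : Prop :=
  (r.1 = [] ∧ r.2 ∈ as.AX) ∨ Conseq L {φ | φ ∈ r.1} r.2

end ASPIC

namespace ASPIC

/-- The well-formed arguments of an argumentation system. -/
def WfArg (L : Logic) (as : ASys L) : Type := {a : Arg L // Wf L as a}

/-- The JSBAF corresponding to an argumentation system: attacks are defeats, supports are
applications of strict rules, preferences are the elitist weakest-link lifting. -/
def toJ (L : Logic) (as : ASys L) : JS.JSBAF (WfArg L as) where
  att a b := Defeats L as a.1 b.1
  supp S b := (Arg.kind b.1 = RK.ax ∨ Arg.kind b.1 = RK.cb) ∧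
    S = {a : WfArg L as | a.1 ∈ Arg.subs b.1}
  pref a b := ewl L as a.1 b.1

/-- The conclusions of the IN-arguments of a labeling. -/
def concls (L : Logic) (as : ASys L) (Lb : WfArg L as → JS.Lab) : Set L.F :=
  {φ | ∃ a : WfArg L as, Lb a = JS.Lab.IN ∧ Arg.concl a.1 = φ}

/-- The AS is consistent: no two strict arguments have contradictory conclusions. -/
def ASConsistent (L : Logic) (as : ASys L) : Prop :=
  ¬ ∃ a b : Arg L, Wf L as a ∧ Wf L as b ∧ DR L a = ∅ ∧ DR L b = ∅ ∧
      negOf L (Arg.concl a) (Arg.concl b)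

end ASPIC

/-!
An OUT label is always explained by an IN argument `c` attacking some `y` that is reached from
`a′` by support steps whose other supporters are all IN. The defeasible rules and the
axiomatic/defeasible sub-conclusions of `y` are among those of `a′` and of these IN co-supporters,
hence among those of the argument `V` built by one consequence-based step from `a` and the
co-supporters. An undercut of `y` undercuts `V`, and a gen-rebut of `y` by `c` becomes, after one
strict step on top of `c`, a gen-rebut of `V` by an IN argument. So `V` has an IN attacker, and
the ⪯-least supporter of `V` decides: if it is `a`, then `V` is a support chain of length zero for
`a`; otherwise it is IN, and being legally IN forces `a` to be OUT.
-/

namespace JS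

variable {A : Type} {J : JSBAF A} {L : A → Lab}

inductive SupportChain (J : JSBAF A) (L : A → Lab) (x : A) : A → Prop
  | refl : SupportChain J L x x
  | tail {y v : A} {S : Set A} : SupportChain J L x y → J.supp S v → y ∈ S →
      (∀ d ∈ S, d ≠ y → L d = Lab.IN) → SupportChain J L x v

theorem legallyOut.exists_supportChain {x : A} (h : legallyOut J L x) :
    ∃ y, SupportChain J L x y ∧ ∃ c, J.att c y ∧ L c = Lab.IN := by
  rcases h with hatt | ⟨n, S, b, hsupp, hnext, hx, hxco, hatt, -, hco, -⟩
  · exact ⟨x, .refl, hatt⟩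
  · refine ⟨b n, ?_, hatt⟩
    suffices ∀ i ≤ n, SupportChain J L x (b i) from this n le_rfl
    intro i
    induction i with
    | zero => exact fun h0 => .tail .refl (hsupp 0 h0) hx hxco
    | succ i ih =>
      exact fun hi =>
        .tail (ih (by omega)) (hsupp (i + 1) hi) (hnext i hi) (hco (i + 1) (by omega) hi)

theorem legallyIn.eq_in_of_supp {x v : A} {S : Set A} (hx : legallyIn J L x) (hS : J.supp S v)
    (hxS : x ∈ S) (hpref : ∀ b ∈ S, b ≠ x → J.pref x b)
    (hin : ∀ b ∈ S, b ≠ x → L b = Lab.IN) : L v = Lab.IN := by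
  rcases hx.2 S v hS hxS hpref with
    hv | ⟨-, b, hb, hbx, hb'⟩ | ⟨-, ⟨b, hb, hbx, hb'⟩ | ⟨b, hb, -, -, hbx, -, -, hb', -⟩⟩
  · exact hv
  all_goals simp [hin b hb hbx] at hb'

theorem legallyIn.eq_out_of_supp {x v a : A} {S : Set A} (hx : legallyIn J L x)
    (hS : J.supp S v) (hxS : x ∈ S) (hpref : ∀ b ∈ S, b ≠ x → J.pref x b)
    (hin : ∀ b ∈ S, b ≠ x → b ≠ a → L b = Lab.IN) (hv : L v = Lab.OUT) : L a = Lab.OUT := by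
  have eq_a : ∀ b ∈ S, b ≠ x → L b ≠ Lab.IN → b = a := fun b hb hbx hb' =>
    by_contra fun hba => hb' (hin b hb hbx hba)
  rcases hx.2 S v hS hxS hpref with
    hv' | ⟨hv', -⟩ | ⟨-, ⟨b, hb, hbx, hb'⟩ | ⟨b₁, hb₁, b₂, hb₂, h₁, h₂, h₁₂, hu₁, hu₂⟩⟩
  · simp [hv] at hv'
  · simp [hv] at hv'
  · rwa [← eq_a b hb hbx (by simp [hb'])]
  · exact absurd ((eq_a b₁ hb₁ h₁ (by simp [hu₁])).trans (eq_a b₂ hb₂ h₂ (by simp [hu₂])).symm) h₁₂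

theorem Admissible.eq_out_of_supp {v a : A} {S : Set A} (hadm : Admissible J L)
    (hS : J.supp S v) (ha : a ∈ S) (hin : ∀ d ∈ S, d ≠ a → L d = Lab.IN)
    (hatt : ∃ c, J.att c v ∧ L c = Lab.IN) (hmin : ∃ x ∈ S, ∀ b ∈ S, b ≠ x → J.pref x b) :
    L a = Lab.OUT := by
  obtain ⟨x, hxS, hx⟩ := hmin
  have hv : L v = Lab.OUT := (hadm.2.1 v).mpr (.inl hatt)
  by_cases hxa : x = a
  · subst hxa
    exact (hadm.2.1 x).mpr (.inr ⟨0, fun _ => S, fun _ => v, fun _ _ => hS,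
      fun _ h => absurd h (Nat.not_lt_zero _), hxS, hin, hatt, fun _ _ => hv,
      fun _ h₁ h₀ => absurd (h₁.trans h₀) (by omega), hx⟩)
  · exact (hadm.1 x (hin x hxS hxa)).eq_out_of_supp hS hxS hx (fun b hb _ hba => hin b hb hba) hv

end JS

namespace ASPIC

variable {L : Logic} {as : ASys L}

theorem Sub.trans {a b c : Arg L} (h₁ : Sub L a b) (h₂ : Sub L b c) : Sub L a c := by
  induction h₂ with
  | refl => exact h₁
  | step y k subs φ hy _ ih => exact .step a y k subs φ hy ih

theorem sub_of_mem {s : Arg L} {k : RK} {l : List (Arg L)} {φ : L.F} (h : s ∈ l) :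
    Sub L s (.node k l φ) :=
  .step s s k l φ h (.refl s)

theorem Sub.eq_or_exists_mem {z : Arg L} {k : RK} {l : List (Arg L)} {φ : L.F}
    (h : Sub L z (.node k l φ)) : z = .node k l φ ∨ ∃ s ∈ l, Sub L z s := by
  cases h with
  | refl => exact .inl rfl
  | step s _ _ _ hs hz => exact .inr ⟨s, hs, hz⟩

theorem wf_of_mem {k : RK} {l : List (Arg L)} {φ : L.F} (h : Wf L as (.node k l φ))
    {s : Arg L} (hs : s ∈ l) : Wf L as s := by
  cases h with
  | ax => cases hs
  | cb _ _ hl => exact hl s hs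
  | df _ _ hl => exact hl s hs

theorem wf_of_sub {s z : Arg L} (h : Sub L s z) (hz : Wf L as z) : Wf L as s := by
  induction h with
  | refl => exact hz
  | step _ _ _ _ hb _ ih => exact ih (wf_of_mem hz hb)

theorem finite_setOf_sub : ∀ t : Arg L, {s | Sub L s t}.Finite
  | .node k l φ => by
    have ih : ∀ s ∈ l, {x | Sub L x s}.Finite := fun s hs =>
      have := List.sizeOf_lt_of_mem hs
      finite_setOf_sub s
    refine ((l.finite_toSet.biUnion ih).insert (.node k l φ)).subset ?_
    intro s hs
    rcases Sub.eq_or_exists_mem hs with rfl | ⟨s', hs', hss'⟩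
    · exact Set.mem_insert _ _
    · exact Set.mem_insert_of_mem _ (Set.mem_biUnion hs' hss')

theorem DR_finite (t : Arg L) : (DR L t).Finite :=
  ((finite_setOf_sub t).image fun s => (s.subs.map Arg.concl, s.concl)).subset
    fun _ ⟨_, hsub, hr⟩ => ⟨_, hsub, Prod.ext hr.symm rfl⟩

theorem ADSubC_finite (t : Arg L) : (ADSubC L t).Finite :=
  ((finite_setOf_sub t).image Arg.concl).subset fun _ ⟨s, hs, _, hφ⟩ => ⟨s, hs, hφ⟩

theorem ADSubC_subset_SubC (t : Arg L) : ADSubC L t ⊆ SubC L t :=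
  fun _ ⟨s, hs, _, hφ⟩ => ⟨s, hs, hφ⟩

theorem mem_DR_node {r : Rule L} {k : RK} {l : List (Arg L)} {φ : L.F} :
    r ∈ DR L (.node k l φ) ↔
      (k = .df ∧ r.1 = l.map Arg.concl ∧ r.2 = φ) ∨ ∃ s ∈ l, r ∈ DR L s := by
  constructor
  · rintro ⟨subs, hsub, hr⟩
    rcases hsub.eq_or_exists_mem with heq | ⟨s, hs, hsub'⟩
    · obtain ⟨rfl, rfl, rfl⟩ := Arg.node.inj heq
      exact .inl ⟨rfl, hr, rfl⟩
    · exact .inr ⟨s, hs, subs, hsub', hr⟩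
  · rintro (⟨rfl, hr, rfl⟩ | ⟨s, hs, subs, hsub, hr⟩)
    · exact ⟨l, .refl _, hr⟩
    · exact ⟨subs, hsub.trans (sub_of_mem hs), hr⟩

theorem mem_ADSubC_node {χ : L.F} {k : RK} {l : List (Arg L)} {φ : L.F} :
    χ ∈ ADSubC L (.node k l φ) ↔ (k ≠ .cb ∧ χ = φ) ∨ ∃ s ∈ l, χ ∈ ADSubC L s := by
  constructor
  · rintro ⟨z, hsub, hk, rfl⟩
    rcases hsub.eq_or_exists_mem with rfl | ⟨s, hs, hsub'⟩
    · exact .inl ⟨hk, rfl⟩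
    · exact .inr ⟨s, hs, z, hsub', hk, rfl⟩
  · rintro (⟨hk, rfl⟩ | ⟨s, hs, z, hsub, hk, rfl⟩)
    · exact ⟨.node k l χ, .refl _, hk, rfl⟩
    · exact ⟨z, hsub.trans (sub_of_mem hs), hk, rfl⟩

def Covers (T z : Arg L) : Prop := DR L z ⊆ DR L T ∧ ADSubC L z ⊆ ADSubC L T

theorem Covers.trans {T U z : Arg L} (h₁ : Covers T U) (h₂ : Covers U z) : Covers T z :=
  ⟨h₂.1.trans h₁.1, h₂.2.trans h₁.2⟩

theorem covers_of_mem {s : Arg L} {k : RK} {l : List (Arg L)} {φ : L.F} (hs : s ∈ l) :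
    Covers (.node k l φ) s :=
  ⟨fun _ hr => mem_DR_node.mpr (.inr ⟨s, hs, hr⟩),
    fun _ hχ => mem_ADSubC_node.mpr (.inr ⟨s, hs, hχ⟩)⟩

theorem covers_node_cb {T : Arg L} {l : List (Arg L)} {φ : L.F} (h : ∀ s ∈ l, Covers T s) :
    Covers T (.node .cb l φ) := by
  constructor
  · intro r hr
    rcases mem_DR_node.mp hr with ⟨hk, -⟩ | ⟨s, hs, hrs⟩
    · cases hk
    · exact (h s hs).1 hrs
  · intro χ hχ
    rcases mem_ADSubC_node.mp hχ with ⟨hk, -⟩ | ⟨s, hs, hχs⟩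
    · exact absurd rfl hk
    · exact (h s hs).2 hχs

theorem covers_node_cb_cons {t t' : Arg L} {k : RK} {l : List (Arg L)} {φ φ' : L.F}
    (h : Covers t t') : Covers (.node k (t :: l) φ) (.node .cb (t' :: l) φ') :=
  covers_node_cb fun _ hs => by
    rcases List.mem_cons.mp hs with rfl | hs
    · exact (covers_of_mem List.mem_cons_self).trans h
    · exact covers_of_mem (List.mem_cons_of_mem t hs)

theorem ASys.exists_rpref_min (as : ASys L) {R : Set (Rule L)} (hR : R.Finite)
    (hne : R.Nonempty) : ∃ r ∈ R, ∀ s ∈ R, as.rpref r s := by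
  let _ : LE (Rule L) := ⟨as.rpref⟩
  have : IsTrans (Rule L) (· ≤ ·) := ⟨as.rpref_trans⟩
  obtain ⟨r, hr, hmin⟩ := hR.exists_minimal hne
  exact ⟨r, hr, fun s hs => (as.rpref_total r s).elim id (hmin hs)⟩

theorem exists_ewl_min {l : List (Arg L)} (hne : l ≠ []) : ∃ x ∈ l, ∀ y ∈ l, ewl L as x y := by
  rcases (⋃ e ∈ l, DR L e).eq_empty_or_nonempty with hR | hR
  · have hDR : ∀ e ∈ l, DR L e = ∅ := fun e he =>
      Set.subset_empty_iff.mp (hR ▸ Set.subset_biUnion_of_mem (u := fun e => DR L e) he)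
    obtain ⟨x, hx⟩ := List.exists_mem_of_ne_nil l hne
    exact ⟨x, hx, fun y hy => .inl ⟨hDR x hx, hDR y hy⟩⟩
  · obtain ⟨r, hr, hmin⟩ :=
      as.exists_rpref_min (l.finite_toSet.biUnion fun e _ => DR_finite e) hR
    obtain ⟨x, hx, hrx⟩ := Set.mem_iUnion₂.mp hr
    exact ⟨x, hx, fun y hy => .inr ⟨r, hrx, fun s hs => hmin s (Set.mem_biUnion hy hs)⟩⟩

theorem ewl_mono {x x' y y' : Arg L} (hx : DR L x ⊆ DR L x') (hy : DR L y' ⊆ DR L y)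
    (h : ewl L as x y) : ewl L as x' y' := by
  rcases h with ⟨-, hy₀⟩ | ⟨r, hr, hall⟩
  · have hy'₀ : DR L y' = ∅ := Set.subset_empty_iff.mp (hy₀ ▸ hy)
    rcases (DR L x').eq_empty_or_nonempty with hx'₀ | ⟨r, hr⟩
    · exact .inl ⟨hx'₀, hy'₀⟩
    · exact .inr ⟨r, hr, fun s hs => absurd hs (hy'₀ ▸ Set.notMem_empty s)⟩
  · exact .inr ⟨r, hx hr, fun s hs => hall s (hy hs)⟩

theorem not_ewl_strict_of_DR_subset {x x' y y' : Arg L} (hx : DR L x' ⊆ DR L x)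
    (hy : DR L y ⊆ DR L y') (h : ¬(ewl L as x y ∧ ¬ ewl L as y x)) :
    ¬(ewl L as x' y' ∧ ¬ ewl L as y' x') :=
  fun ⟨h₁, h₂⟩ => h ⟨ewl_mono hx hy h₁, fun h₃ => h₂ (ewl_mono hy hx h₃)⟩

theorem models_conjL (i : L.I) (φ : L.F) (l : List L.F) :
    L.Models i (conjL L φ l) ↔ ∀ χ ∈ φ :: l, L.Models i χ := by
  induction l generalizing φ with
  | nil => simp [conjL]
  | cons ψ l ih => simp [conjL, L.conj_spec, ih]

theorem models_concl_of_sub {i : L.I} {z s : Arg L} (H : ∀ ψ ∈ ADSubC L z, L.Models i ψ)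
    (hs : Wf L as s) (hsz : Sub L s z) : L.Models i (Arg.concl s) := by
  induction hs generalizing z with
  | ax φ _ => exact H φ ⟨_, hsz, nofun, rfl⟩
  | cb l φ _ hφ ih =>
    exact hφ i fun ψ ⟨t, ht, hψ⟩ => hψ ▸ ih t ht H ((sub_of_mem ht).trans hsz)
  | df l φ _ _ _ => exact H φ ⟨_, hsz, nofun, rfl⟩

/-- The axiomatic and defeasible sub-conclusions of `z` entail all of its sub-conclusions, hence
the negation of any conjunction containing them follows from a gen-rebuttal of `z`. -/
theorem wf_neg_conjL_of_genRebuts {c z : Arg L} (hc : Wf L as c) (hz : Wf L as z)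
    (hcz : GenRebuts L c z) (φ : L.F) {Δ : List L.F} (hΔ : ∀ ψ ∈ ADSubC L z, ψ ∈ Δ) :
    Wf L as (.node .cb [c] (L.neg (conjL L φ Δ))) := by
  obtain ⟨-, γ, γs, hγ, hcγ⟩ := hcz
  refine .cb [c] _ (by simpa using hc) fun i hi => ?_
  have hnc : ¬ L.Models i (conjL L γ γs) := by
    rw [← L.neg_spec, ← hcγ]
    exact hi _ ⟨c, List.mem_singleton_self c, rfl⟩
  rw [L.neg_spec, models_conjL]
  refine fun hΔi => hnc ((models_conjL i γ γs).mpr fun χ hχ => ?_)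
  obtain ⟨s, hs, rfl⟩ := hγ χ hχ
  exact models_concl_of_sub (fun ψ hψ => hΔi ψ (List.mem_cons_of_mem φ (hΔ ψ hψ)))
    (wf_of_sub hs hz) hs

theorem Undercuts.of_DR_subset {c z T : Arg L} (h : Undercuts L as c z)
    (hDR : DR L z ⊆ DR L T) : Undercuts L as c T := by
  obtain ⟨subs, φ, hsub, nm, hnm, hneg⟩ := h
  obtain ⟨subs', hsub', hconcl⟩ :=
    hDR (show (subs.map Arg.concl, φ) ∈ DR L z from ⟨subs, hsub, rfl⟩)
  exact ⟨subs', φ, hsub', nm, hconcl ▸ hnm, hneg⟩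

theorem exists_in_attacker_of_covers {Lb : WfArg L as → JS.Lab}
    (hadm : JS.Admissible (toJ L as) Lb) {c z T : WfArg L as} (hc : Lb c = JS.Lab.IN)
    (hcz : (toJ L as).att c z) (hTz : Covers T.1 z.1) :
    ∃ w, (toJ L as).att w T ∧ Lb w = JS.Lab.IN := by
  rcases hcz with hund | ⟨hreb, hpref⟩
  · exact ⟨c, .inl (hund.of_DR_subset hTz.1), hc⟩
  set Δ := (ADSubC_finite z.1).toFinset.toList
  have hΔ : ∀ ψ, ψ ∈ Δ ↔ ψ ∈ ADSubC L z.1 := by simp [Δ]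
  set w : Arg L := .node .cb [c.1] (L.neg (conjL L T.1.concl Δ))
  have hw : Wf L as w := wf_neg_conjL_of_genRebuts c.2 z.2 hreb _ fun ψ hψ => (hΔ ψ).mpr hψ
  have hwc : DR L w ⊆ DR L c.1 := fun r hr => by
    rcases mem_DR_node.mp hr with ⟨hk, -⟩ | ⟨s, hs, hrs⟩
    · cases hk
    · rwa [List.mem_singleton.mp hs] at hrs
  have hc_only : ∀ b : WfArg L as, b.1 ∈ [c.1] → b = c := fun _ hb =>
    Subtype.ext (List.mem_singleton.mp hb)
  refine ⟨⟨w, hw⟩, .inr ⟨⟨fun h => hreb.1 (Set.subset_empty_iff.mp (h ▸ hTz.1)),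
    T.1.concl, Δ, fun χ hχ => ?_, rfl⟩, not_ewl_strict_of_DR_subset hwc hTz.1 hpref⟩, ?_⟩
  · rcases List.mem_cons.mp hχ with rfl | hχ
    · exact ⟨T.1, .refl _, rfl⟩
    · exact ADSubC_subset_SubC _ (hTz.2 ((hΔ χ).mp hχ))
  · exact (hadm.1 c hc).eq_in_of_supp (S := {d | d.1 ∈ [c.1]}) ⟨.inr rfl, rfl⟩
      (List.mem_singleton_self _) (fun b hb hbc => absurd (hc_only b hb) hbc)
      (fun b hb hbc => absurd (hc_only b hb) hbc)

theorem exists_eq_node_cb_of_supp {S : Set (WfArg L as)} {v y : WfArg L as}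
    (hS : (toJ L as).supp S v) (hy : y ∈ S) : ∃ l φ, v.1 = .node .cb l φ ∧ y.1 ∈ l := by
  obtain ⟨hk, rfl⟩ := hS
  obtain ⟨⟨k, l, φ⟩, hv⟩ := v
  cases hv with
  | ax => cases hy
  | cb => exact ⟨l, φ, rfl, hy⟩
  | df => simp [Arg.kind] at hk

theorem exists_covers_of_supportChain {Lb : WfArg L as → JS.Lab} {a' y : WfArg L as}
    (h : JS.SupportChain (toJ L as) Lb a' y) :
    ∃ co : List (Arg L), (∀ e ∈ co, Wf L as e) ∧
      (∀ d : WfArg L as, d.1 ∈ co → Lb d = JS.Lab.IN) ∧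
      Covers (.node .cb (a'.1 :: co) a'.1.concl) y.1 := by
  classical
  induction h with
  | refl => exact ⟨[], by simp, by simp, covers_of_mem List.mem_cons_self⟩
  | @tail y v S _ hS hy hin ih =>
    obtain ⟨co, hwf, hco, hcov⟩ := ih
    obtain ⟨l, ψ, hv, hyl⟩ := exists_eq_node_cb_of_supp hS hy
    obtain ⟨-, rfl⟩ := hS
    refine ⟨co ++ l.filter (· ≠ y.1), fun e he => ?_, fun d hd => ?_, ?_⟩
    · rcases List.mem_append.mp he with he | he
      · exact hwf e he
      · exact wf_of_mem (hv ▸ v.2) (List.mem_filter.mp he).1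
    · rcases List.mem_append.mp hd with hd | hd
      · exact hco d hd
      · obtain ⟨hdl, hdy⟩ := List.mem_filter.mp hd
        exact hin d (show d.1 ∈ v.1.subs by rw [hv]; exact hdl)
          fun h => by simp [h] at hdy
    · rw [hv]
      refine covers_node_cb fun s hs => ?_
      by_cases hsy : s = y.1
      · subst hsy
        refine (covers_node_cb fun t ht => covers_of_mem ?_).trans hcov
        exact List.cons_subset_cons _ (List.subset_append_left _ _) ht
      · exact covers_of_mem (by simp [hs, hsy])

theorem eq_out_of_attacked_node_cb {Lb : WfArg L as → JS.Lab}
    (hadm : JS.Admissible (toJ L as) Lb) {a : WfArg L as} {co : List (Arg L)} {φ : L.F}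
    (hV : Wf L as (.node .cb (a.1 :: co) φ)) (hco : ∀ d : WfArg L as, d.1 ∈ co → Lb d = JS.Lab.IN)
    (hatt : ∃ w, (toJ L as).att w ⟨_, hV⟩ ∧ Lb w = JS.Lab.IN) : Lb a = JS.Lab.OUT := by
  obtain ⟨x, hx, hmin⟩ := exists_ewl_min (as := as) (List.cons_ne_nil a.1 co)
  refine hadm.eq_out_of_supp (S := {d | d.1 ∈ a.1 :: co}) ⟨.inr rfl, rfl⟩ List.mem_cons_self
    (fun d hd hda => hco d ((List.mem_cons.mp hd).resolve_left fun h => hda (Subtype.ext h)))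
    hatt ⟨⟨x, wf_of_mem hV hx⟩, hx, fun b hb _ => hmin b.1 hb⟩

end ASPIC

open ASPIC in
/-- In any admissible labeling of the JSBAF of a Deductive ASPIC⊖ argumentation
system, if DR(a′) ⊆ DR(a) and ADSub(a′)^C ⊆ ADSub(a)^C and a′ is labeled OUT, then a is labeled
OUT. -/
theorem out_propagates_to_supersets (L : Logic) (as : ASys L)
    (Lb : WfArg L as → JS.Lab) (hadm : JS.Admissible (toJ L as) Lb)
    (a a' : WfArg L as)
    (hDR : DR L a'.1 ⊆ DR L a.1) (hAD : ADSubC L a'.1 ⊆ ADSubC L a.1)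
    (hout : Lb a' = JS.Lab.OUT) :
    Lb a = JS.Lab.OUT := by
  obtain ⟨y, hchain, c, hcy, hc⟩ := ((hadm.2.1 a').mp hout).exists_supportChain
  obtain ⟨co, hwf, hco, hcov⟩ := exists_covers_of_supportChain hchain
  have hV : Wf L as (.node .cb (a.1 :: co) a.1.concl) :=
    .cb _ _ (List.forall_mem_cons.mpr ⟨a.2, hwf⟩) fun i hi => hi _ ⟨a.1, List.mem_cons_self, rfl⟩
  have hVy : Covers (.node .cb (a.1 :: co) a.1.concl) y.1 :=
    (covers_node_cb_cons ⟨hDR, hAD⟩).trans hcov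
  exact eq_out_of_attacked_node_cb hadm hV hco
    (exists_in_attacker_of_covers (T := ⟨_, hV⟩) hadm hc hcy hVy)
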